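/- arXiv:2101.11128 — 6 statements merged into one kernel-verified Lean document; each statement's English description precedes it below -/
import Mathlib

section
/- Let V be a finite-dimensional real inner product space, W : Fin m → V a linearly independent family with Gram matrix M (entries M_{αβ} = ⟨W_α,W_β⟩, inverse entries m_{αβ}), and n ∈ V with n ∉ span{W_1,…,W_m}; set D := ⟨n,n⟩ − Σ_{α,β} m_{αβ}⟨n,W_α⟩⟨n,W_β⟩ (so D ≠ 0). For v ∈ V with ⟨W_α, v⟩ = 0 for all α, define ε := −2⟨n,v⟩/D, λ_k := (2⟨n,v⟩/D)·Σ_ℓ m_{kℓ}⟨n,W_ℓ⟩, and δ(v) := v + Σ_k λ_k W_k + ε·n. Then ⟨W_α, δ(v)⟩ = 0 for every α, i.e., the post-impact velocity again satisfies the nonholonomic constraints. -/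
/-!
Write `c = 2⟪n, v⟫ / D`. Since the Gram matrix `M` of the independent family `W` is invertible,
`M M⁻¹ = 1` gives `⟪W α, ∑ k, λ k • W k⟫ = c ⟪n, W α⟫`, and the term `ε • n = -c • n` cancels it.
-/

open scoped RealInnerProductSpace

open Matrix in
theorem inner_sum_gram_inv_mulVec_smul {V ι : Type*} [NormedAddCommGroup V]
    [InnerProductSpace ℝ V] [Fintype ι] [DecidableEq ι] {W : ι → V}
    (hW : LinearIndependent ℝ W) (y : ι → ℝ) (α : ι) :
    ⟪W α, ∑ k, ((gram ℝ W)⁻¹ *ᵥ y) k • W k⟫ = y α := by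
  have hdet : (gram ℝ W).det ≠ 0 := det_gram_ne_zero_iff_linearIndependent.mpr hW
  calc ⟪W α, ∑ k, ((gram ℝ W)⁻¹ *ᵥ y) k • W k⟫
      = (gram ℝ W *ᵥ ((gram ℝ W)⁻¹ *ᵥ y)) α := by
        simp only [inner_sum, real_inner_smul_right, mulVec, dotProduct, gram_apply,
          mul_comm]
    _ = y α := by rw [mulVec_mulVec, mul_nonsing_inv _ (Ne.isUnit hdet), one_mulVec]

theorem stmt2_general {V : Type*} [NormedAddCommGroup V] [InnerProductSpace ℝ V]
    {m : ℕ} (W : Fin m → V) (hW : LinearIndependent ℝ W)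
    (M : Matrix (Fin m) (Fin m) ℝ) (hM : ∀ α β, M α β = ⟪W α, W β⟫)
    (n : V)
    (D : ℝ)
    (v : V) (hv : ∀ α, ⟪W α, v⟫ = 0)
    (ε : ℝ) (hε : ε = -2 * ⟪n, v⟫ / D)
    (lam : Fin m → ℝ)
    (hlam : ∀ k, lam k = (2 * ⟪n, v⟫ / D) * ∑ l, M⁻¹ k l * ⟪n, W l⟫)
    (δv : V) (hδ : δv = v + (∑ k, lam k • W k) + ε • n) :
    ∀ α, ⟪W α, δv⟫ = 0 := by
  intro α
  have hM_gram : M = Matrix.gram ℝ W := Matrix.ext hM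
  have hlam_gram : lam = (2 * ⟪n, v⟫ / D) • (Matrix.gram ℝ W)⁻¹.mulVec fun l ↦ ⟪n, W l⟫ := by
    ext k
    simp [hlam, hM_gram, Matrix.mulVec, dotProduct]
  have hsum : ⟪W α, ∑ k, lam k • W k⟫ = 2 * ⟪n, v⟫ / D * ⟪n, W α⟫ := by
    simp only [hlam_gram, Pi.smul_apply, smul_eq_mul, mul_smul, ← Finset.smul_sum,
      real_inner_smul_right, inner_sum_gram_inv_mulVec_smul hW]
  rw [hδ, inner_add_right, inner_add_right, hv, hsum, real_inner_smul_right, hε,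
    real_inner_comm n]
  ring

/-- The nonholonomic impact map (Theorem 3.2 of the paper) maps velocities
satisfying the constraints to velocities satisfying the constraints. -/
theorem stmt2 {V : Type*} [NormedAddCommGroup V] [InnerProductSpace ℝ V]
    [FiniteDimensional ℝ V]
    {m : ℕ} (W : Fin m → V) (hW : LinearIndependent ℝ W)
    (M : Matrix (Fin m) (Fin m) ℝ) (hM : ∀ α β, M α β = ⟪W α, W β⟫)
    (n : V) (hn : n ∉ Submodule.span ℝ (Set.range W))
    (D : ℝ)
    (hD : D = ⟪n, n⟫ - ∑ α, ∑ β, M⁻¹ α β * (⟪n, W α⟫ * ⟪n, W β⟫))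
    (v : V) (hv : ∀ α, ⟪W α, v⟫ = 0)
    (ε : ℝ) (hε : ε = -2 * ⟪n, v⟫ / D)
    (lam : Fin m → ℝ)
    (hlam : ∀ k, lam k = (2 * ⟪n, v⟫ / D) * ∑ l, M⁻¹ k l * ⟪n, W l⟫)
    (δv : V) (hδ : δv = v + (∑ k, lam k • W k) + ε • n) :
    ∀ α, ⟪W α, δv⟫ = 0 :=
  stmt2_general W hW M hM n D v hv ε hε lam hlam δv hδ
end

section
/- Let V be a finite-dimensional real inner product space, W : Fin m → V a linearly independent family with Gram matrix M (entries M_{αβ} = ⟨W_α,W_β⟩, inverse entries m_{αβ}), and n ∈ V with n ∉ span{W_1,…,W_m}; set D := ⟨n,n⟩ − Σ_{α,β} m_{αβ}⟨n,W_α⟩⟨n,W_β⟩ (so D ≠ 0). For v ∈ V with ⟨W_α, v⟩ = 0 for all α, define ε := −2⟨n,v⟩/D, λ_k := (2⟨n,v⟩/D)·Σ_ℓ m_{kℓ}⟨n,W_ℓ⟩, and δ(v) := v + Σ_k λ_k W_k + ε·n. Then ‖δ(v)‖ = ‖v‖, i.e., kinetic energy is conserved by the nonholonomic impact. -/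
/-!
Let `w` be the component of `n` orthogonal to `span W`: the coefficients `M⁻¹ ⟪n, W⟫` solve the
normal equations, so `D = ‖w‖²`, and `⟪w, v⟫ = ⟪n, v⟫` because `v ⊥ W`. Hence
`δ(v) = v - (2 ⟪w, v⟫ / ‖w‖²) • w` is minus the reflection of `v` in the line `ℝ ∙ w`,
which is an isometry.
-/

open scoped RealInnerProductSpace

open Matrix

section

variable {V ι : Type*} [NormedAddCommGroup V] [InnerProductSpace ℝ V]

theorem norm_sub_two_inner_div_inner_self_smul (w v : V) :
    ‖v - (2 * ⟪w, v⟫ / ⟪w, w⟫) • w‖ = ‖v‖ := by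
  have hrefl : v - (2 * ⟪w, v⟫ / ⟪w, w⟫) • w = -(ℝ ∙ w).reflection v := by
    rw [Submodule.reflection_singleton_apply, RCLike.ofReal_real_eq_id, id,
      ← real_inner_self_eq_norm_sq]
    module
  rw [hrefl, norm_neg, LinearIsometryEquiv.norm_map]

variable [Fintype ι]

theorem inner_sum_smul_eq_gram_mulVec (W : ι → V) (x : ι → ℝ) (l : ι) :
    ⟪W l, ∑ k, x k • W k⟫ = (gram ℝ W *ᵥ x) l := by
  simp only [inner_sum, real_inner_smul_right, mulVec, dotProduct, gram_apply, mul_comm]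

variable [DecidableEq ι]

/-- For linearly independent `W`, this is `n` minus its orthogonal projection onto `span W`. -/
noncomputable def orthogonalResidual (W : ι → V) (n : V) : V :=
  n - ∑ k, ((gram ℝ W)⁻¹ *ᵥ fun l => ⟪n, W l⟫) k • W k

theorem inner_orthogonalResidual_of_forall_inner_eq_zero (W : ι → V) (n : V) {v : V}
    (hv : ∀ k, ⟪W k, v⟫ = 0) : ⟪orthogonalResidual W n, v⟫ = ⟪n, v⟫ := by
  simp [orthogonalResidual, inner_sub_left, sum_inner, real_inner_smul_left, hv]

theorem inner_orthogonalResidual_eq_zero {W : ι → V} (hW : LinearIndependent ℝ W) (n : V)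
    (l : ι) : ⟪W l, orthogonalResidual W n⟫ = 0 := by
  have hG : IsUnit (gram ℝ W) := (posDef_gram_of_linearIndependent hW).isUnit
  rw [orthogonalResidual, inner_sub_right, inner_sum_smul_eq_gram_mulVec, mulVec_mulVec,
    mul_nonsing_inv _ ((isUnit_iff_isUnit_det _).mp hG), one_mulVec, real_inner_comm, sub_self]

theorem inner_self_orthogonalResidual {W : ι → V} (hW : LinearIndependent ℝ W) (n : V) :
    ⟪orthogonalResidual W n, orthogonalResidual W n⟫
      = ⟪n, n⟫ - ∑ α, ∑ β, (gram ℝ W)⁻¹ α β * (⟪n, W α⟫ * ⟪n, W β⟫) := by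
  rw [inner_orthogonalResidual_of_forall_inner_eq_zero W n
      (inner_orthogonalResidual_eq_zero hW n), orthogonalResidual, inner_sub_right, inner_sum]
  simp only [real_inner_smul_right, mulVec, dotProduct, Finset.sum_mul]
  congr 1
  refine Finset.sum_congr rfl fun α _ => Finset.sum_congr rfl fun β _ => ?_
  ring

end

theorem stmt3_general {V : Type*} [NormedAddCommGroup V] [InnerProductSpace ℝ V]
    {m : ℕ} (W : Fin m → V) (hW : LinearIndependent ℝ W)
    (M : Matrix (Fin m) (Fin m) ℝ) (hM : ∀ α β, M α β = ⟪W α, W β⟫)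
    (n : V)
    (D : ℝ)
    (hD : D = ⟪n, n⟫ - ∑ α, ∑ β, M⁻¹ α β * (⟪n, W α⟫ * ⟪n, W β⟫))
    (v : V) (hv : ∀ α, ⟪W α, v⟫ = 0)
    (ε : ℝ) (hε : ε = -2 * ⟪n, v⟫ / D)
    (lam : Fin m → ℝ)
    (hlam : ∀ k, lam k = (2 * ⟪n, v⟫ / D) * ∑ l, M⁻¹ k l * ⟪n, W l⟫)
    (δv : V) (hδ : δv = v + (∑ k, lam k • W k) + ε • n) :
    ‖δv‖ = ‖v‖ := by
  obtain rfl : M = gram ℝ W := Matrix.ext hM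
  have hreflect : δv = v - (2 * ⟪orthogonalResidual W n, v⟫ /
      ⟪orthogonalResidual W n, orthogonalResidual W n⟫) • orthogonalResidual W n := by
    rw [inner_orthogonalResidual_of_forall_inner_eq_zero W n hv, inner_self_orthogonalResidual hW,
      ← hD, hδ, hε, orthogonalResidual]
    simp only [hlam, mul_smul, ← Finset.smul_sum, mulVec, dotProduct]
    module
  rw [hreflect, norm_sub_two_inner_div_inner_self_smul]

/-- The nonholonomic impact map (Theorem 3.2 of the paper) conserves kinetic energy. -/
theorem stmt3 {V : Type*} [NormedAddCommGroup V] [InnerProductSpace ℝ V]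
    [FiniteDimensional ℝ V]
    {m : ℕ} (W : Fin m → V) (hW : LinearIndependent ℝ W)
    (M : Matrix (Fin m) (Fin m) ℝ) (hM : ∀ α β, M α β = ⟪W α, W β⟫)
    (n : V) (hn : n ∉ Submodule.span ℝ (Set.range W))
    (D : ℝ)
    (hD : D = ⟪n, n⟫ - ∑ α, ∑ β, M⁻¹ α β * (⟪n, W α⟫ * ⟪n, W β⟫))
    (v : V) (hv : ∀ α, ⟪W α, v⟫ = 0)
    (ε : ℝ) (hε : ε = -2 * ⟪n, v⟫ / D)
    (lam : Fin m → ℝ)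
    (hlam : ∀ k, lam k = (2 * ⟪n, v⟫ / D) * ∑ l, M⁻¹ k l * ⟪n, W l⟫)
    (δv : V) (hδ : δv = v + (∑ k, lam k • W k) + ε • n) :
    ‖δv‖ = ‖v‖ :=
  stmt3_general W hW M hM n D hD v hv ε hε lam hlam δv hδ
end

section
/- Let V be a finite-dimensional real inner product space, W : Fin m → V a linearly independent family with Gram matrix M (entries M_{αβ} = ⟨W_α,W_β⟩, inverse entries m_{αβ}), and n ∈ V with n ∉ span{W_1,…,W_m}; set D := ⟨n,n⟩ − Σ_{α,β} m_{αβ}⟨n,W_α⟩⟨n,W_β⟩ (so D ≠ 0). For v ∈ V with ⟨W_α, v⟩ = 0 for all α, define ε := −2⟨n,v⟩/D, λ_k := (2⟨n,v⟩/D)·Σ_ℓ m_{kℓ}⟨n,W_ℓ⟩, and δ(v) := v + Σ_k λ_k W_k + ε·n. Then ⟨n, δ(v)⟩ = −⟨n, v⟩; in particular, if ⟨n, v⟩ < 0 (inward pre-impact velocity) then ⟨n, δ(v)⟩ > 0 (outward post-impact velocity). -/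
open scoped RealInnerProductSpace

/-- The nonholonomic impact map (Theorem 3.2 of the paper) reverses the normal
component of the velocity: inward pre-impact velocities become outward. -/
theorem stmt4 {V : Type*} [NormedAddCommGroup V] [InnerProductSpace ℝ V]
    [FiniteDimensional ℝ V]
    {m : ℕ} (W : Fin m → V) (hW : LinearIndependent ℝ W)
    (M : Matrix (Fin m) (Fin m) ℝ) (hM : ∀ α β, M α β = ⟪W α, W β⟫)
    (n : V) (hn : n ∉ Submodule.span ℝ (Set.range W))
    (D : ℝ)
    (hD : D = ⟪n, n⟫ - ∑ α, ∑ β, M⁻¹ α β * (⟪n, W α⟫ * ⟪n, W β⟫))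
    (v : V) (hv : ∀ α, ⟪W α, v⟫ = 0)
    (ε : ℝ) (hε : ε = -2 * ⟪n, v⟫ / D)
    (lam : Fin m → ℝ)
    (hlam : ∀ k, lam k = (2 * ⟪n, v⟫ / D) * ∑ l, M⁻¹ k l * ⟪n, W l⟫)
    (δv : V) (hδ : δv = v + (∑ k, lam k • W k) + ε • n) :
    ⟪n, δv⟫ = -⟪n, v⟫ ∧ (⟪n, v⟫ < 0 → 0 < ⟪n, δv⟫) := by
  -- M is invertible
  have hMzero : ∀ x : Fin m → ℝ, M.mulVec x = 0 → x = 0 := by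
    intro x hx
    have hsum : (∑ i, x i • W i) = 0 := by
      have h0 : ⟪∑ i, x i • W i, ∑ j, x j • W j⟫ = 0 := by
        rw [inner_sum]
        have h1 : ∀ j, ⟪∑ i, x i • W i, x j • W j⟫ = x j * M.mulVec x j := by
          intro j
          rw [sum_inner]
          simp only [inner_smul_left, inner_smul_right, RCLike.conj_to_real,
            Matrix.mulVec, dotProduct, Finset.mul_sum]
          exact Finset.sum_congr rfl fun i _ => by rw [hM j i, real_inner_comm]; ring
        rw [Finset.sum_congr rfl fun j _ => h1 j]
        simp [hx]
      exact inner_self_eq_zero.mp h0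
    have := linearIndependent_iff'.mp hW Finset.univ x hsum
    funext i; exact this i (Finset.mem_univ i)
  have hMunit : IsUnit M := by
    rw [← Matrix.mulVec_injective_iff_isUnit]
    intro a b hab
    have h2 : M.mulVec (a - b) = 0 := by
      rw [Matrix.mulVec_sub, hab, sub_self]
    exact sub_eq_zero.mp (hMzero _ h2)
  have hMM : M * M⁻¹ = 1 := Matrix.mul_nonsing_inv M (hMunit.map (Matrix.detMonoidHom))
  -- the projection p onto span W
  set y : Fin m → ℝ := fun k => ∑ l, M⁻¹ k l * ⟪n, W l⟫ with hy
  set p : V := ∑ k, y k • W k with hp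
  have hportho : ∀ j, ⟪n - p, W j⟫ = 0 := by
    intro j
    have hpj : ⟪p, W j⟫ = ⟪n, W j⟫ := by
      rw [hp, sum_inner]
      have h3 : ∀ k, ⟪y k • W k, W j⟫ = M j k * y k := by
        intro k; rw [inner_smul_left]
        simp only [RCLike.conj_to_real, hM j k, real_inner_comm (W k) (W j)]; ring
      rw [Finset.sum_congr rfl fun k _ => h3 k]
      have h4 : ∑ k, M j k * y k = (M * (M⁻¹ * Matrix.replicateCol (Fin 1) (fun l => ⟪n, W l⟫))) j 0 := by
        simp [Matrix.mul_apply, hy, Finset.mul_sum, Finset.sum_mul, mul_assoc]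
      rw [h4, ← Matrix.mul_assoc, hMM]
      simp [Matrix.mul_apply, Matrix.one_apply]
    rw [inner_sub_left, hpj, sub_self]
  have hDval : D = ⟪n - p, n - p⟫ := by
    have hnp : ⟪n, p⟫ = ∑ α, ∑ β, M⁻¹ α β * (⟪n, W α⟫ * ⟪n, W β⟫) := by
      rw [hp, inner_sum]
      simp only [inner_smul_right, hy]
      refine Finset.sum_congr rfl fun α _ => ?_
      simp only [Finset.sum_mul, Finset.mul_sum]
      exact Finset.sum_congr rfl fun β _ => by ring
    have hpp : ⟪p, n - p⟫ = 0 := by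
      rw [hp, sum_inner]
      apply Finset.sum_eq_zero
      intro k _
      rw [inner_smul_left]
      have h5 := hportho k
      rw [real_inner_comm] at h5
      rw [hp] at h5; simp [h5]
    have h6 : ⟪n - p, n - p⟫ = ⟪n, n - p⟫ - ⟪p, n - p⟫ := inner_sub_left _ _ _
    rw [h6, hpp, sub_zero, inner_sub_right, hD, hnp]
  have hDpos : 0 < D := by
    rw [hDval]
    rcases (real_inner_self_nonneg (x := n - p)).lt_or_eq with h | h
    · exact h
    · exfalso
      have h7 : n - p = 0 := inner_self_eq_zero.mp h.symm
      have hnp : n = p := sub_eq_zero.mp h7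
      apply hn
      rw [hnp, hp]
      exact Submodule.sum_mem _ fun k _ =>
        Submodule.smul_mem _ _ (Submodule.subset_span ⟨k, rfl⟩)
  have hDne : D ≠ 0 := ne_of_gt hDpos
  -- main computation
  set a : ℝ := ⟪n, v⟫ with ha
  have hS : (∑ α, ∑ β, M⁻¹ α β * (⟪n, W α⟫ * ⟪n, W β⟫)) = ⟪n, n⟫ - D := by
    rw [hD]; ring
  have key : ⟪n, δv⟫ = -a := by
    rw [hδ, inner_add_right, inner_add_right, inner_sum, inner_smul_right]
    have hlsum : (∑ k, ⟪n, lam k • W k⟫) = (2 * a / D) * (⟪n, n⟫ - D) := by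
      rw [← hS]
      rw [Finset.sum_congr rfl (fun k _ => by rw [inner_smul_right, hlam k])]
      simp only [Finset.mul_sum, Finset.sum_mul]
      refine Finset.sum_congr rfl fun α _ => ?_
      exact Finset.sum_congr rfl fun β _ => by ring
    rw [hlsum, hε, ← ha]
    field_simp
    ring
  refine ⟨key, fun hneg => ?_⟩
  rw [key]; linarith
end

section
/- Let V be a finite-dimensional real inner product space, W : Fin m → V a linearly independent family with Gram matrix M (entries M_{αβ} = ⟨W_α,W_β⟩, inverse entries m_{αβ}), and n ∈ V with n ∉ span{W_1,…,W_m}; set D := ⟨n,n⟩ − Σ_{α,β} m_{αβ}⟨n,W_α⟩⟨n,W_β⟩ (so D ≠ 0). For arbitrary v ∈ V define c := ⟨n,v⟩ − Σ_{α,β} m_{αβ}⟨n,W_β⟩⟨W_α,v⟩, ε := −2c/D, λ_k := (2c/D)·Σ_ℓ m_{kℓ}⟨n,W_ℓ⟩, and δ(v) := v + Σ_k λ_k W_k + ε·n. Then ‖δ(v)‖ = ‖v‖; that is, the global nonholonomic impact map conserves kinetic energy even off the constraint distribution. -/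
open scoped RealInnerProductSpace

/-- The global nonholonomic impact map (Remark 3.3, eq. (16) of the paper)
conserves kinetic energy even off the constraint distribution. -/
theorem stmt6 {V : Type*} [NormedAddCommGroup V] [InnerProductSpace ℝ V]
    [FiniteDimensional ℝ V]
    {m : ℕ} (W : Fin m → V) (hW : LinearIndependent ℝ W)
    (M : Matrix (Fin m) (Fin m) ℝ) (hM : ∀ α β, M α β = ⟪W α, W β⟫)
    (n : V) (hn : n ∉ Submodule.span ℝ (Set.range W))
    (D : ℝ)
    (hD : D = ⟪n, n⟫ - ∑ α, ∑ β, M⁻¹ α β * (⟪n, W α⟫ * ⟪n, W β⟫))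
    (v : V) (c : ℝ)
    (hc : c = ⟪n, v⟫ - ∑ α, ∑ β, M⁻¹ α β * (⟪n, W β⟫ * ⟪W α, v⟫))
    (ε : ℝ) (hε : ε = -2 * c / D)
    (lam : Fin m → ℝ)
    (hlam : ∀ k, lam k = (2 * c / D) * ∑ l, M⁻¹ k l * ⟪n, W l⟫)
    (δv : V) (hδ : δv = v + (∑ k, lam k • W k) + ε • n) :
    ‖δv‖ = ‖v‖ := by
  -- M is invertible
  have hMunit : IsUnit M.det := by
    rw [← Matrix.isUnit_iff_isUnit_det, ← Matrix.mulVec_injective_iff_isUnit]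
    intro x y hxy
    have key : ∀ z : Fin m → ℝ, M.mulVec z = 0 → z = 0 := by
      intro z hz
      have h1 : (∑ i, z i • W i) = 0 := by
        have h2 : ⟪∑ i, z i • W i, ∑ j, z j • W j⟫ = 0 := by
          rw [inner_sum]
          simp only [real_inner_smul_right, sum_inner, real_inner_smul_left]
          have step : ∀ j, (∑ i, z j * (z i * ⟪W i, W j⟫)) = z j * (M.mulVec z) j := by
            intro j
            rw [← Finset.mul_sum]
            congr 1
            simp only [Matrix.mulVec, dotProduct]
            refine Finset.sum_congr rfl fun i _ => by
              rw [hM, real_inner_comm]; ring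
          rw [Finset.sum_congr rfl fun j _ => step j, hz]
          simp
        exact inner_self_eq_zero.mp h2
      have := linearIndependent_iff'.mp hW Finset.univ z h1
      funext i; exact this i (Finset.mem_univ i)
    have : M.mulVec (x - y) = 0 := by
      rw [Matrix.mulVec_sub, hxy, sub_self]
    have := key _ this
    exact sub_eq_zero.mp this
  have hMM : M⁻¹ * M = 1 := Matrix.nonsing_inv_mul M hMunit
  have hMsymm : ∀ i j, M i j = M j i := fun i j => by
    rw [hM, hM, real_inner_comm]
  -- inverse is symmetric
  have hMisymm : ∀ i j, M⁻¹ i j = M⁻¹ j i := by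
    have hT : M.transpose = M := by
      ext i j; exact hMsymm j i
    have h2 : (M⁻¹).transpose = M⁻¹ := by
      rw [Matrix.transpose_nonsing_inv, hT]
    intro i j
    exact congrFun (congrFun h2 j) i
  set s : Fin m → ℝ := fun k => ∑ l, M⁻¹ k l * ⟪n, W l⟫ with hs
  set P : V := n - ∑ k, s k • W k with hP
  -- P is orthogonal to each W j
  have hPW : ∀ j, ⟪P, W j⟫ = 0 := by
    intro j
    rw [hP, inner_sub_left, sum_inner]
    simp only [real_inner_smul_left]
    have : ∑ k, s k * ⟪W k, W j⟫ = ⟪n, W j⟫ := by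
      simp only [hs, Finset.sum_mul]
      rw [Finset.sum_comm]
      have : ∀ l, ∑ k, M⁻¹ k l * ⟪n, W l⟫ * ⟪W k, W j⟫
          = (if l = j then 1 else 0) * ⟪n, W l⟫ := by
        intro l
        have h1 : ∑ k, M⁻¹ k l * ⟪n, W l⟫ * ⟪W k, W j⟫
            = (∑ k, M⁻¹ l k * M k j) * ⟪n, W l⟫ := by
          rw [Finset.sum_mul]
          exact Finset.sum_congr rfl fun k _ => by
            rw [hMisymm k l, hM]; ring
        rw [h1]
        have : ∑ k, M⁻¹ l k * M k j = (M⁻¹ * M) l j := rfl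
        rw [this, hMM]
        simp [Matrix.one_apply]
      rw [Finset.sum_congr rfl fun l _ => this l]
      simp
    rw [this]; ring
  -- ⟪P, v⟫ = c
  have hPv : ⟪P, v⟫ = c := by
    rw [hP, inner_sub_left, sum_inner, hc]
    congr 1
    refine Finset.sum_congr rfl fun k _ => ?_
    rw [real_inner_smul_left, hs, Finset.sum_mul]
    refine Finset.sum_congr rfl fun l _ => by ring
  -- ⟪P, P⟫ = D
  have hPP : ⟪P, P⟫ = D := by
    have h1 : ⟪P, P⟫ = ⟪P, n⟫ := by
      rw [hP]
      conv_lhs => rw [inner_sub_right]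
      rw [inner_sum]
      simp only [real_inner_smul_right, ← hP, hPW, mul_zero]
      simp
    rw [h1, real_inner_comm, hP, inner_sub_right, inner_sum, hD]
    congr 1
    refine Finset.sum_congr rfl fun k _ => ?_
    rw [real_inner_smul_right]
    simp only [hs]
    rw [Finset.sum_mul]
    refine Finset.sum_congr rfl fun l _ => by ring
  -- δv = v + ε • P
  have hδ2 : δv = v + ε • P := by
    rw [hδ, hP, smul_sub, hε]
    have : (∑ k, lam k • W k) = -((-2 * c / D) • ∑ k, s k • W k) := by
      rw [Finset.smul_sum, ← Finset.sum_neg_distrib]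
      refine Finset.sum_congr rfl fun k _ => ?_
      rw [hlam, hs, smul_smul]
      have : -((-2 * c / D) * s k) • W k = ((2 * c / D) * s k) • W k := by
        congr 1; ring
      rw [← this, neg_smul]
    rw [this]
    abel
  -- conclude
  have hsq : ‖δv‖ ^ 2 = ‖v‖ ^ 2 := by
    rw [hδ2]
    rw [← real_inner_self_eq_norm_sq, ← real_inner_self_eq_norm_sq]
    simp only [inner_add_add_self, real_inner_smul_left, real_inner_smul_right,
      hPP, hPv, real_inner_comm v P]
    by_cases hDz : D = 0
    · rw [hε, hDz]; simp
    · have hvP : ⟪v, P⟫ = c := by rw [real_inner_comm]; exact hPv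
      rw [hvP, hε]; field_simp; ring
  have h1 : ‖δv‖ = Real.sqrt (‖v‖ ^ 2) := by
    rw [← hsq, Real.sqrt_sq (norm_nonneg _)]
  rw [h1, Real.sqrt_sq (norm_nonneg _)]
end

section
/- Let V be a module over ℝ and Λ(V) its exterior algebra. Let n ≥ 1, let x : Fin(n−1) → V and p : Fin n → V be families of elements, and let A be an (n−1)×n real matrix with entries A_j^i (row j ∈ {1,…,n−1}, column i ∈ {1,…,n}). For k ∈ {1,…,n} set Ω_k := x_1∧…∧x_{n−1}∧p_1∧…∧p̂_k∧…∧p_n (the wedge of all x_j and all p_i with p_k omitted, in increasing order), and let A_k be the (n−1)×(n−1) matrix obtained from A by deleting its k-th column. Then in Λ(V): (Σ_{j=1}^{n−1} Σ_{i=1}^{n} A_j^i · x_j ∧ p_i)^{n−1} = (−1)^{⌊(n−1)/2⌋} · (n−1)! · Σ_{k=1}^{n} det(A_k) · Ω_k. -/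
open ExteriorAlgebra

section Aux

variable {V : Type*} [AddCommGroup V] [Module ℝ V]

/-- The ordered product of the `ι`-images of a tuple of vectors. -/
private noncomputable def Ep {m : ℕ} (a : Fin m → V) : ExteriorAlgebra ℝ V :=
  (List.ofFn fun t => ι ℝ (a t)).prod

private lemma Ep_eq_iotaMulti {m : ℕ} (a : Fin m → V) : Ep a = ιMulti ℝ m a :=
  (ιMulti_apply a).symm

private lemma iota_anticomm (u v : V) : ι ℝ u * ι ℝ v = -(ι ℝ v * ι ℝ u) :=
  eq_neg_of_add_eq_zero_left (ι_add_mul_swap u v)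

private lemma Ep_succ {m : ℕ} (a : Fin (m + 1) → V) :
    Ep a = ι ℝ (a 0) * Ep (fun i => a i.succ) := by
  simp [Ep, List.ofFn_succ]

private lemma iota_mul_Ep (v : V) : ∀ {m : ℕ} (a : Fin m → V),
    ι ℝ v * Ep a = ((-1 : ℝ) ^ m) • (Ep a * ι ℝ v)
  | 0, a => by simp [Ep]
  | m + 1, a => by
    rw [Ep_succ, ← mul_assoc, iota_anticomm, neg_mul, mul_assoc,
      iota_mul_Ep v (fun i => a i.succ), mul_smul_comm, ← mul_assoc, pow_succ, ← neg_smul]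
    congr 1
    ring

private lemma Ep_perm {m : ℕ} (a : Fin m → V) (σ : Equiv.Perm (Fin m)) :
    Ep (a ∘ σ) = ((Equiv.Perm.sign σ : ℤ) : ℝ) • Ep a := by
  rw [Ep_eq_iotaMulti, Ep_eq_iotaMulti, AlternatingMap.map_perm, Units.smul_def,
    Int.cast_smul_eq_zsmul]

private lemma Ep_eq_zero {m : ℕ} (a : Fin m → V) {i j : Fin m} (hne : i ≠ j)
    (h : a i = a j) : Ep a = 0 := by
  rw [Ep_eq_iotaMulti]
  exact AlternatingMap.map_eq_zero_of_eq _ a h hne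

private lemma interleave : ∀ {m : ℕ} (a b : Fin m → V),
    (List.ofFn fun t => ι ℝ (a t) * ι ℝ (b t)).prod =
      ((-1 : ℝ) ^ m.choose 2) • (Ep a * Ep b)
  | 0, a, b => by simp [Ep]
  | m + 1, a, b => by
    have hmid : (ι ℝ (a 0) * ι ℝ (b 0)) *
        (Ep (fun i => a i.succ) * Ep (fun i => b i.succ)) =
        ((-1 : ℝ) ^ m) • ((ι ℝ (a 0) * Ep (fun i => a i.succ)) *
          (ι ℝ (b 0) * Ep (fun i => b i.succ))) := by
      rw [mul_assoc, ← mul_assoc (ι ℝ (b 0)), iota_mul_Ep, smul_mul_assoc, mul_smul_comm]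
      congr 1
      simp [mul_assoc]
    have hc : (m + 1).choose 2 = m.choose 2 + m := by
      rw [Nat.choose_succ_succ, Nat.choose_one_right, Nat.add_comm]
    rw [List.ofFn_succ, List.prod_cons, interleave (fun i => a i.succ) (fun i => b i.succ),
      mul_smul_comm, hmid, smul_smul, Ep_succ a, Ep_succ b, hc, pow_add]

private lemma sum_smul_pow {α : Type*} [Fintype α] (c : α → ℝ)
    (u : α → ExteriorAlgebra ℝ V) :
    ∀ m : ℕ, (∑ a : α, c a • u a) ^ m =
      ∑ g : Fin m → α, (∏ t, c (g t)) • (List.ofFn fun t => u (g t)).prod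
  | 0 => by simp
  | m + 1 => by
    rw [pow_succ, sum_smul_pow c u m, Finset.sum_mul]
    rw [← (Fin.snocEquiv fun _ => α).sum_comp
      (fun g => (∏ t, c (g t)) • (List.ofFn fun t => u (g t)).prod), Fintype.sum_prod_type]
    rw [Finset.sum_comm]
    refine Finset.sum_congr rfl fun g _ => ?_
    rw [Finset.mul_sum]
    refine Finset.sum_congr rfl fun a _ => ?_
    have h1 : (∏ t, c (Fin.snocEquiv (fun _ => α) (a, g) t)) = (∏ t, c (g t)) * c a := by
      simp [Fin.prod_univ_castSucc]
    have h2 : (List.ofFn fun t => u (Fin.snocEquiv (fun _ => α) (a, g) t)).prod =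
        (List.ofFn fun t => u (g t)).prod * u a := by
      rw [List.ofFn_succ', List.prod_concat]
      simp
    rw [h1, h2, smul_mul_smul_comm]

private lemma neg_one_pow_choose (n : ℕ) :
    ((-1 : ℝ)) ^ (n.choose 2) = (-1 : ℝ) ^ (n / 2) := by
  rcases Nat.even_or_odd n with ⟨m, hm⟩ | ⟨m, hm⟩
  · rcases m with _ | m'
    · simp [hm]
    · have hn : n = 2 * m' + 2 := by omega
      have h1 : n.choose 2 = (2 * m' + 1) * (m' + 1) := by
        rw [Nat.choose_two_right, hn]
        have : (2 * m' + 2) - 1 = 2 * m' + 1 := by omega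
        rw [this]
        have : (2 * m' + 2) * (2 * m' + 1) = ((2 * m' + 1) * (m' + 1)) * 2 := by ring
        rw [this, Nat.mul_div_cancel _ (by norm_num)]
      have h2 : n / 2 = m' + 1 := by omega
      rw [h1, h2, pow_mul, Odd.neg_one_pow ⟨m', by ring⟩]
  · have h1 : n.choose 2 = (2 * m + 1) * m := by
      rw [Nat.choose_two_right, hm]
      have : (2 * m + 1) - 1 = 2 * m := by omega
      rw [this]
      have : (2 * m + 1) * (2 * m) = ((2 * m + 1) * m) * 2 := by ring
      rw [this, Nat.mul_div_cancel _ (by norm_num)]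
    have h2 : n / 2 = m := by omega
    rw [h1, h2, pow_mul, Odd.neg_one_pow ⟨m, by ring⟩]

end Aux

/-- Lemma 5.2 of the paper (with the paper's `n - 1` rendered as `n`):
the `(n-1)`-st power of `Σ A_j^i x_j ∧ p_i` in the exterior algebra is
`(-1)^⌊(n-1)/2⌋ (n-1)! Σ_k det(A_k) Ω_k`, where `A_k` deletes the `k`-th column
and `Ω_k` omits `p_k`. -/
theorem stmt8 {V : Type*} [AddCommGroup V] [Module ℝ V]
    (n : ℕ) (x : Fin n → V) (p : Fin (n + 1) → V)
    (A : Matrix (Fin n) (Fin (n + 1)) ℝ) :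
    (∑ j : Fin n, ∑ i : Fin (n + 1),
        A j i • (ι ℝ (x j) * ι ℝ (p i))) ^ n =
      ((-1 : ℝ) ^ (n / 2) * n.factorial) •
        ∑ k : Fin (n + 1),
          (A.submatrix id k.succAbove).det •
            ((List.ofFn fun j : Fin n => ι ℝ (x j)).prod *
              (List.ofFn fun j : Fin n => ι ℝ (p (k.succAbove j))).prod) := by
  classical
  -- the map that parametrizes the "good" summands
  set G : (Equiv.Perm (Fin n) × Fin (n + 1) × Equiv.Perm (Fin n)) →
         (Fin n → Fin n × Fin (n + 1)) :=
    fun z => fun t => (z.1 t, z.2.1.succAbove (z.2.2 (z.1 t))) with hG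
  set F : (Fin n → Fin n × Fin (n + 1)) → ExteriorAlgebra ℝ V :=
    fun g => (∏ t, A (g t).1 (g t).2) •
      ((-1 : ℝ) ^ (n.choose 2)) •
        (Ep (fun t => x ((g t).1)) * Ep (fun t => p ((g t).2))) with hF
  -- Step 1+2: expand the power into a sum over all choice functions
  have step1 : (∑ j : Fin n, ∑ i : Fin (n + 1), A j i • (ι ℝ (x j) * ι ℝ (p i))) ^ n =
      ∑ g : Fin n → Fin n × Fin (n + 1), F g := by
    have hps : (∑ j : Fin n, ∑ i : Fin (n + 1), A j i • (ι ℝ (x j) * ι ℝ (p i))) =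
        ∑ z : Fin n × Fin (n + 1), A z.1 z.2 • (ι ℝ (x z.1) * ι ℝ (p z.2)) := by
      rw [Fintype.sum_prod_type]
    rw [hps]
    rw [sum_smul_pow (fun z : Fin n × Fin (n + 1) => A z.1 z.2)
      (fun z : Fin n × Fin (n + 1) => ι ℝ (x z.1) * ι ℝ (p z.2)) n]
    refine Finset.sum_congr rfl fun g _ => ?_
    rw [hF]
    rw [interleave (fun t => x ((g t).1)) (fun t => p ((g t).2))]
  -- terms with a repeated index vanish
  have hzero : ∀ g : Fin n → Fin n × Fin (n + 1),
      (¬ Function.Injective fun t => (g t).1) ∨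
        (¬ Function.Injective fun t => (g t).2) → F g = 0 := by
    rintro g (h | h)
    · rw [Function.Injective] at h
      push_neg at h
      obtain ⟨i, j, hij, hne⟩ := h
      rw [hF]
      simp only
      rw [Ep_eq_zero (fun t => x ((g t).1)) hne (congrArg x hij), zero_mul, smul_zero, smul_zero]
    · rw [Function.Injective] at h
      push_neg at h
      obtain ⟨i, j, hij, hne⟩ := h
      rw [hF]
      simp only
      rw [Ep_eq_zero (fun t => p ((g t).2)) hne (congrArg p hij), mul_zero, smul_zero, smul_zero]
  -- every "good" choice function is in the image of `G`
  have himg : ∀ g : Fin n → Fin n × Fin (n + 1),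
      (Function.Injective fun t => (g t).1) → (Function.Injective fun t => (g t).2) →
      ∃ z, G z = g := by
    intro g h1 h2
    have hbij : Function.Bijective fun t => (g t).1 :=
      Finite.injective_iff_bijective.mp h1
    let σ : Equiv.Perm (Fin n) := Equiv.ofBijective _ hbij
    let μ : Fin n → Fin (n + 1) := fun j => (g (σ.symm j)).2
    have hμ : Function.Injective μ := fun a b hab => σ.symm.injective (h2 hab)
    have hex : ∃ k : Fin (n + 1), ∀ j, μ j ≠ k := by
      by_contra hcon
      push_neg at hcon
      have hs : Function.Surjective μ := fun k => hcon k
      have := Fintype.card_le_of_surjective μ hs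
      simp at this
    obtain ⟨k, hk⟩ := hex
    have hchoice : ∀ j, ∃ i, k.succAbove i = μ j := fun j => Fin.exists_succAbove_eq (hk j)
    choose ρ hρ using hchoice
    have hρinj : Function.Injective ρ := by
      intro a b hab
      apply hμ
      rw [← hρ a, ← hρ b, hab]
    let π : Equiv.Perm (Fin n) := Equiv.ofBijective ρ (Finite.injective_iff_bijective.mp hρinj)
    refine ⟨(σ, k, π), ?_⟩
    funext t
    have hfst : σ t = (g t).1 := rfl
    have hsnd : k.succAbove (π (σ t)) = (g t).2 := by
      have h1' : k.succAbove (ρ (σ t)) = μ (σ t) := hρ (σ t)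
      have h2' : μ (σ t) = (g t).2 := by
        show (g (σ.symm (σ t))).2 = (g t).2
        rw [Equiv.symm_apply_apply]
      exact h1'.trans h2'
    show (σ t, k.succAbove (π (σ t))) = g t
    rw [hsnd, hfst]
  -- `G` is injective
  have hGinj : Function.Injective G := by
    rintro ⟨σ, k, π⟩ ⟨σ', k', π'⟩ h
    have hfst : ∀ t, σ t = σ' t := fun t => congrArg Prod.fst (congrFun h t)
    have hσ : σ = σ' := Equiv.ext hfst
    subst hσ
    have hsnd : ∀ j, k.succAbove (π j) = k'.succAbove (π' j) := by
      intro j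
      have := congrArg Prod.snd (congrFun h (σ.symm j))
      simpa [hG, Equiv.apply_symm_apply] using this
    have hkk : k = k' := by
      by_contra hne
      obtain ⟨i, hi⟩ := Fin.exists_succAbove_eq hne
      have hj := hsnd (π'.symm i)
      rw [Equiv.apply_symm_apply, hi] at hj
      exact Fin.succAbove_ne k (π (π'.symm i)) hj
    subst hkk
    have hπ : π = π' := Equiv.ext fun j => Fin.succAbove_right_injective (hsnd j)
    rw [hπ]
  -- Step 3: reindex the sum by the parametrization
  have step3 : ∑ z : Equiv.Perm (Fin n) × Fin (n + 1) × Equiv.Perm (Fin n), F (G z) =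
      ∑ g : Fin n → Fin n × Fin (n + 1), F g := by
    refine Finset.sum_of_injOn G hGinj.injOn (by simp) ?_ (fun z _ => rfl)
    intro g _ hg
    by_cases h1 : Function.Injective fun t => (g t).1
    · by_cases h2 : Function.Injective fun t => (g t).2
      · obtain ⟨z, hz⟩ := himg g h1 h2
        exact absurd ⟨z, by simp, hz⟩ hg
      · exact hzero g (Or.inr h2)
    · exact hzero g (Or.inl h1)
  -- value of `F` on the image of `G`
  have key : ∀ (σ π : Equiv.Perm (Fin n)) (k : Fin (n + 1)),
      F (G (σ, k, π)) =
        (((Equiv.Perm.sign π : ℤ) : ℝ) * ∏ j, A j (k.succAbove (π j))) •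
          (((-1 : ℝ) ^ (n.choose 2)) •
            (Ep x * Ep (fun j : Fin n => p (k.succAbove j)))) := by
    intro σ π k
    have hxfun : (fun t => x ((G (σ, k, π) t).1)) = x ∘ σ := rfl
    have hpfun : (fun t => p ((G (σ, k, π) t).2)) =
        (fun j : Fin n => p (k.succAbove j)) ∘ (σ.trans π) := rfl
    have hcoeff : (∏ t, A ((G (σ, k, π) t).1) ((G (σ, k, π) t).2)) =
        ∏ j, A j (k.succAbove (π j)) :=
      Equiv.prod_comp σ (fun j => A j (k.succAbove (π j)))
    rw [hF]
    simp only
    rw [hcoeff, hxfun, hpfun, Ep_perm, Ep_perm]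
    have hst : σ.trans π = π * σ := rfl
    rw [hst, Equiv.Perm.sign_mul, smul_mul_smul_comm, smul_smul, smul_smul, smul_smul]
    congr 1
    push_cast
    rcases Int.units_eq_one_or (Equiv.Perm.sign σ) with h | h <;>
      rcases Int.units_eq_one_or (Equiv.Perm.sign π) with h' | h' <;>
        rw [h, h'] <;> push_cast <;> ring
  -- the determinant identity
  have det_eq : ∀ k : Fin (n + 1),
      (∑ π : Equiv.Perm (Fin n),
        ((Equiv.Perm.sign π : ℤ) : ℝ) * ∏ j, A j (k.succAbove (π j))) =
      (A.submatrix id k.succAbove).det := by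
    intro k
    rw [← Matrix.det_transpose, Matrix.det_apply]
    refine Finset.sum_congr rfl fun π _ => ?_
    rw [Units.smul_def, zsmul_eq_mul]
    simp [Matrix.submatrix_apply, Matrix.transpose_apply]
  -- assemble
  rw [step1, ← step3, Fintype.sum_prod_type]
  have hinner : ∀ σ : Equiv.Perm (Fin n),
      (∑ w : Fin (n + 1) × Equiv.Perm (Fin n), F (G (σ, w))) =
        ((-1 : ℝ) ^ (n.choose 2)) • ∑ k : Fin (n + 1),
          (A.submatrix id k.succAbove).det •
            (Ep x * Ep (fun j : Fin n => p (k.succAbove j))) := by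
    intro σ
    rw [Fintype.sum_prod_type, Finset.smul_sum]
    refine Finset.sum_congr rfl fun k _ => ?_
    calc (∑ π : Equiv.Perm (Fin n), F (G (σ, k, π)))
        = ∑ π : Equiv.Perm (Fin n),
            (((Equiv.Perm.sign π : ℤ) : ℝ) * ∏ j, A j (k.succAbove (π j))) •
              (((-1 : ℝ) ^ (n.choose 2)) •
                (Ep x * Ep (fun j : Fin n => p (k.succAbove j)))) :=
          Finset.sum_congr rfl fun π _ => key σ π k
      _ = (∑ π : Equiv.Perm (Fin n),
            ((Equiv.Perm.sign π : ℤ) : ℝ) * ∏ j, A j (k.succAbove (π j))) •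
              (((-1 : ℝ) ^ (n.choose 2)) •
                (Ep x * Ep (fun j : Fin n => p (k.succAbove j)))) :=
          (Finset.sum_smul).symm
      _ = ((-1 : ℝ) ^ (n.choose 2)) •
            (A.submatrix id k.succAbove).det •
              (Ep x * Ep (fun j : Fin n => p (k.succAbove j))) := by
          rw [det_eq k, smul_comm]
  calc (∑ σ : Equiv.Perm (Fin n), ∑ w : Fin (n + 1) × Equiv.Perm (Fin n), F (G (σ, w)))
      = ∑ _σ : Equiv.Perm (Fin n), ((-1 : ℝ) ^ (n.choose 2)) • ∑ k : Fin (n + 1),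
          (A.submatrix id k.succAbove).det •
            (Ep x * Ep (fun j : Fin n => p (k.succAbove j))) :=
        Finset.sum_congr rfl fun σ _ => hinner σ
    _ = (n.factorial : ℕ) • ((-1 : ℝ) ^ (n.choose 2)) • ∑ k : Fin (n + 1),
          (A.submatrix id k.succAbove).det •
            (Ep x * Ep (fun j : Fin n => p (k.succAbove j))) := by
        rw [Finset.sum_const, Finset.card_univ, Fintype.card_perm, Fintype.card_fin]
    _ = ((-1 : ℝ) ^ (n / 2) * n.factorial) • ∑ k : Fin (n + 1),
          (A.submatrix id k.succAbove).det •
            ((List.ofFn fun j : Fin n => ι ℝ (x j)).prod *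
              (List.ofFn fun j : Fin n => ι ℝ (p (k.succAbove j))).prod) := by
        rw [← Nat.cast_smul_eq_nsmul ℝ, smul_smul, mul_comm, neg_one_pow_choose]
        rfl
end

section
/- Let V be a module over ℝ and Λ(V) its exterior algebra. Let n ≥ 1, let x : Fin(n−1) → V and p : Fin n → V be families of elements, let a : Fin(n−1) → ℝ and b : Fin n → ℝ, and set ν := Σ_{j=1}^{n−1} a_j·x_j + Σ_{i=1}^{n} b_i·p_i and ω_S := Σ_{j=1}^{n−1} x_j ∧ p_j. Then in Λ(V): ν ∧ ω_S^{n−1} = (−1)^{⌊(n−1)/2⌋} · (n−1)! · b_n · x_1∧…∧x_{n−1}∧p_1∧…∧p_n. -/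
open ExteriorAlgebra

section Aux

variable {V : Type*} [AddCommGroup V] [Module ℝ V]

lemma my_swap (u w : V) : ι ℝ u * ι ℝ w = -(ι ℝ w * ι ℝ u) :=
  eq_neg_of_add_eq_zero_left (ι_add_mul_swap u w)

/-- move a generator from the right of a product of generators to the left -/
lemma my_move (l : List V) (v : V) :
    (l.map (ι ℝ)).prod * ι ℝ v = ((-1 : ℝ) ^ l.length) • (ι ℝ v * (l.map (ι ℝ)).prod) := by
  induction l with
  | nil => simp
  | cons w t ih =>
      simp only [List.map_cons, List.prod_cons, List.length_cons, mul_assoc, ih,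
        mul_smul_comm, pow_succ]
      rw [← mul_assoc, my_swap w v, neg_mul, mul_assoc]
      rw [smul_neg, mul_neg_one, neg_smul]

/-- a generator anticommutes with a product of two generators -/
lemma my_sw2 (u w z : V) :
    ι ℝ u * (ι ℝ w * ι ℝ z) = (ι ℝ w * ι ℝ z) * ι ℝ u := by
  calc ι ℝ u * (ι ℝ w * ι ℝ z) = (ι ℝ u * ι ℝ w) * ι ℝ z := (mul_assoc _ _ _).symm
    _ = -(ι ℝ w * ι ℝ u) * ι ℝ z := by rw [my_swap]
    _ = -(ι ℝ w * (ι ℝ u * ι ℝ z)) := by rw [neg_mul, mul_assoc]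
    _ = -(ι ℝ w * -(ι ℝ z * ι ℝ u)) := by rw [my_swap u z]
    _ = (ι ℝ w * ι ℝ z) * ι ℝ u := by rw [mul_neg, neg_neg, mul_assoc]

/-- products of two generators commute -/
lemma my_comm2 (u v w z : V) :
    Commute (ι ℝ u * ι ℝ v) (ι ℝ w * ι ℝ z) := by
  show _ = _
  calc (ι ℝ u * ι ℝ v) * (ι ℝ w * ι ℝ z)
      = ι ℝ u * (ι ℝ v * (ι ℝ w * ι ℝ z)) := mul_assoc _ _ _
    _ = ι ℝ u * ((ι ℝ w * ι ℝ z) * ι ℝ v) := by rw [my_sw2]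
    _ = (ι ℝ u * (ι ℝ w * ι ℝ z)) * ι ℝ v := (mul_assoc _ _ _).symm
    _ = ((ι ℝ w * ι ℝ z) * ι ℝ u) * ι ℝ v := by rw [my_sw2]
    _ = (ι ℝ w * ι ℝ z) * (ι ℝ u * ι ℝ v) := mul_assoc _ _ _

lemma my_sq2 (u w : V) : (ι ℝ u * ι ℝ w) * (ι ℝ u * ι ℝ w) = 0 := by
  rw [mul_assoc, ← mul_assoc (ι ℝ w), my_swap w u, neg_mul, mul_neg, ← mul_assoc,
    ← mul_assoc, ι_sq_zero, zero_mul, zero_mul, neg_zero]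

end Aux

section Arith

lemma my_key (m : ℕ) : m * (m - 1) / 2 + m = (m + 1) * m / 2 := by
  have hmul : (m + 1) * m = m * (m - 1) + 2 * m := by
    cases m with
    | zero => rfl
    | succ m' =>
        simp only [Nat.add_sub_cancel]
        ring
  rw [hmul, Nat.add_mul_div_left _ _ (by norm_num : 0 < 2)]

lemma my_parity : ∀ m : ℕ, m * (m - 1) / 2 % 2 = m / 2 % 2 := by
  intro m
  induction m using Nat.strong_induction_on with
  | _ m ih =>
    match m with
    | 0 => rfl
    | 1 => rfl
    | (m + 2) =>
      have h1 := ih m (by omega)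
      have h21 : m + 2 - 1 = m + 1 := by omega
      have hmul : (m + 2) * (m + 1) = m * (m - 1) + 2 * (2 * m + 1) := by
        cases m with
        | zero => rfl
        | succ m' =>
            simp only [Nat.add_sub_cancel]
            ring
      have e : (m + 2) * (m + 2 - 1) / 2 = m * (m - 1) / 2 + (2 * m + 1) := by
        rw [h21, hmul, Nat.add_mul_div_left _ _ (by norm_num : 0 < 2)]
      rw [e]
      generalize m * (m - 1) / 2 = q at h1 ⊢
      have h2 : (m + 2) / 2 = m / 2 + 1 := by omega
      rw [h2]
      generalize m / 2 = r at h1 ⊢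
      omega

end Arith

section Ring

variable {R : Type*} [Ring R]

/-- binomial for `t^2 = 0` -/
lemma my_lemB (s t : R) (h : s * t = t * s) (ht : t * t = 0) :
    ∀ k : ℕ, (s + t) ^ (k + 1) = s ^ (k + 1) + (k + 1) • (s ^ k * t) := by
  intro k
  induction k with
  | zero => simp
  | succ k ih =>
      have hpow : s ^ k * t * s = s ^ (k + 1) * t := by
        rw [mul_assoc, ← h, ← mul_assoc, ← pow_succ]
      calc (s + t) ^ (k + 2) = (s + t) ^ (k + 1) * (s + t) := by rw [pow_succ]
        _ = (s ^ (k + 1) + (k + 1) • (s ^ k * t)) * (s + t) := by rw [ih]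
        _ = s ^ (k + 2) + (s ^ (k + 1) * t + ((k + 1) • (s ^ k * t * s)
              + (k + 1) • (s ^ k * (t * t)))) := by
            simp only [add_mul, mul_add, smul_mul_assoc, smul_add, pow_succ, mul_assoc]
            abel
        _ = s ^ (k + 2) + (k + 2) • (s ^ (k + 1) * t) := by
            rw [ht, mul_zero, smul_zero, add_zero, hpow, add_comm (s ^ (k + 1) * t),
              ← succ_nsmul]

/-- killing lemma for commuting square-zero family -/
lemma my_killC : ∀ (m : ℕ) (c : Fin m → R), (∀ i j, Commute (c i) (c j)) →
    (∀ i, c i * c i = 0) → ∀ i : Fin m, c i * (List.ofFn c).prod = 0 := by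
  intro m
  induction m with
  | zero => exact fun c _ _ i => i.elim0
  | succ m ih =>
      intro c hc hsq i
      rw [List.ofFn_succ, List.prod_cons, ← mul_assoc]
      by_cases h : i = 0
      · rw [h, hsq, zero_mul]
      · rw [(hc i 0).eq, mul_assoc]
        have h2 := ih (fun j => c j.succ) (fun i j => hc _ _) (fun i => hsq _) (i.pred h)
        simp only [Fin.succ_pred] at h2
        rw [h2, mul_zero]

/-- power of a sum of commuting square-zero elements -/
lemma my_lemA : ∀ (m : ℕ) (c : Fin m → R), (∀ i j, Commute (c i) (c j)) →
    (∀ i, c i * c i = 0) →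
    (∑ i, c i) ^ m = m.factorial • (List.ofFn c).prod := by
  intro m
  induction m with
  | zero => simp
  | succ m ih =>
      intro c hc hsq
      set s : R := ∑ k : Fin m, c k.castSucc with hs
      set t : R := c (Fin.last m) with htdef
      have hsum : (∑ i, c i) = s + t := Fin.sum_univ_castSucc c
      have hcomm : s * t = t * s := by
        rw [hs, Finset.sum_mul, Finset.mul_sum]
        exact Finset.sum_congr rfl fun k _ => (hc _ _).eq
      have ht2 : t * t = 0 := hsq _
      have hsm : s ^ m = m.factorial • (List.ofFn fun k : Fin m => c k.castSucc).prod :=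
        ih (fun k => c k.castSucc) (fun i j => hc _ _) (fun i => hsq _)
      have hs1 : s ^ (m + 1) = 0 := by
        rw [pow_succ', hsm, mul_smul_comm, hs, Finset.sum_mul]
        rw [Finset.sum_eq_zero, smul_zero]
        intro k _
        exact my_killC m (fun k => c k.castSucc) (fun i j => hc _ _) (fun i => hsq _) k
      rw [hsum, my_lemB s t hcomm ht2 m, hs1, zero_add, hsm, smul_mul_assoc, smul_smul,
        List.ofFn_succ', List.concat_eq_append, List.prod_append, List.prod_cons,
        List.prod_nil, mul_one, Nat.factorial_succ]

end Ring

section Pairs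

variable {V : Type*} [AddCommGroup V] [Module ℝ V]

lemma my_move' {m : ℕ} (f : Fin m → V) (v : V) :
    (List.ofFn fun j => ι ℝ (f j)).prod * ι ℝ v
      = ((-1 : ℝ) ^ m) • (ι ℝ v * (List.ofFn fun j => ι ℝ (f j)).prod) := by
  have h1 : (List.ofFn fun j => ι ℝ (f j)) = (List.ofFn f).map (ι ℝ) := by
    rw [List.map_ofFn]; rfl
  have h2 := my_move (List.ofFn f) v
  rw [h1, h2, List.length_ofFn]

lemma my_move'' {m : ℕ} (f : Fin m → V) (v : V) :
    ι ℝ v * (List.ofFn fun j => ι ℝ (f j)).prod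
      = ((-1 : ℝ) ^ m) • ((List.ofFn fun j => ι ℝ (f j)).prod * ι ℝ v) := by
  rw [my_move' f v, smul_smul, ← pow_add, ← two_mul, pow_mul, neg_one_sq, one_pow, one_smul]

lemma my_assoc4 (X P A B : ExteriorAlgebra ℝ V) : X * P * (A * B) = X * (P * A) * B := by
  rw [mul_assoc, mul_assoc, mul_assoc]

lemma my_prodPairs : ∀ (m : ℕ) (u w : Fin m → V),
    (List.ofFn fun j => ι ℝ (u j) * ι ℝ (w j)).prod
      = ((-1 : ℝ) ^ (m * (m - 1) / 2)) •
        ((List.ofFn fun j => ι ℝ (u j)).prod * (List.ofFn fun j => ι ℝ (w j)).prod) := by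
  intro m
  induction m with
  | zero => simp
  | succ m ih =>
      intro u w
      rw [List.ofFn_succ' (fun j => ι ℝ (u j) * ι ℝ (w j)),
        List.ofFn_succ' (fun j => ι ℝ (u j)), List.ofFn_succ' (fun j => ι ℝ (w j))]
      simp only [List.concat_eq_append, List.prod_append, List.prod_cons, List.prod_nil,
        mul_one]
      rw [ih (fun k => u k.castSucc) (fun k => w k.castSucc)]
      have hmv : (List.ofFn fun k : Fin m => ι ℝ (w k.castSucc)).prod * ι ℝ (u (Fin.last m))
          = ((-1:ℝ)^m) • (ι ℝ (u (Fin.last m)) *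
              (List.ofFn fun k : Fin m => ι ℝ (w k.castSucc)).prod) :=
        my_move' (fun k => w k.castSucc) _
      rw [smul_mul_assoc, my_assoc4, hmv, mul_smul_comm, smul_mul_assoc, smul_smul,
        ← pow_add, ← mul_assoc, ← mul_assoc]
      have hsg : ((-1:ℝ)) ^ (m * (m - 1) / 2 + m) = (-1:ℝ) ^ ((m + 1) * (m + 1 - 1) / 2) := by
        rw [Nat.add_sub_cancel, my_key]
      rw [hsg]

end Pairs

/-- Proposition 5.3 of the paper (with the paper's `n - 1` rendered as `n`):
wedging a 1-form `ν = Σ a_j x_j + Σ b_i p_i` with `(Σ_{j<n} x_j ∧ p_j)^n`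
singles out the coefficient `b_n` of the omitted `p_n`. -/
theorem stmt10 {V : Type*} [AddCommGroup V] [Module ℝ V]
    (n : ℕ) (x : Fin n → V) (p : Fin (n + 1) → V)
    (a : Fin n → ℝ) (b : Fin (n + 1) → ℝ) :
    ((∑ j : Fin n, a j • ι ℝ (x j)) + ∑ i : Fin (n + 1), b i • ι ℝ (p i)) *
        (∑ j : Fin n, ι ℝ (x j) * ι ℝ (p j.castSucc)) ^ n =
      ((-1 : ℝ) ^ (n / 2) * n.factorial * b (Fin.last n)) •
        ((List.ofFn fun j : Fin n => ι ℝ (x j)).prod *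
          (List.ofFn fun i : Fin (n + 1) => ι ℝ (p i)).prod) := by
  set X := (List.ofFn fun j : Fin n => ι ℝ (x j)).prod with hX
  set P := (List.ofFn fun k : Fin n => ι ℝ (p k.castSucc)).prod with hP
  have hPfull : (List.ofFn fun i : Fin (n + 1) => ι ℝ (p i)).prod
      = P * ι ℝ (p (Fin.last n)) := by
    rw [List.ofFn_succ' (fun i => ι ℝ (p i)), List.concat_eq_append, List.prod_append,
      List.prod_cons, List.prod_nil, mul_one, hP]
  have hω : (∑ j : Fin n, ι ℝ (x j) * ι ℝ (p j.castSucc)) ^ n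
      = n.factorial • (List.ofFn fun j : Fin n => ι ℝ (x j) * ι ℝ (p j.castSucc)).prod :=
    my_lemA n _ (fun i j => my_comm2 _ _ _ _) (fun i => my_sq2 _ _)
  have hpairs := my_prodPairs n x (fun k => p k.castSucc)
  have hkillx : ∀ j : Fin n, ι ℝ (x j) * (X * P) = 0 := by
    intro j
    rw [← mul_assoc, hX, ι_mul_prod_list x j, zero_mul]
  have hmoveX : ∀ v : V, ι ℝ v * X = ((-1:ℝ)^n) • (X * ι ℝ v) := by
    intro v
    rw [hX]
    exact my_move'' x v
  have hmoveP : ∀ v : V, ι ℝ v * P = ((-1:ℝ)^n) • (P * ι ℝ v) := by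
    intro v
    rw [hP]
    exact my_move'' (fun k : Fin n => p k.castSucc) v
  have hkillp : ∀ k : Fin n, ι ℝ (p k.castSucc) * (X * P) = 0 := by
    intro k
    rw [← mul_assoc, hmoveX, smul_mul_assoc, mul_assoc, hP,
      ι_mul_prod_list (fun k : Fin n => p k.castSucc) k, mul_zero, smul_zero]
  have hlast : ι ℝ (p (Fin.last n)) * (X * P) = X * P * ι ℝ (p (Fin.last n)) := by
    rw [← mul_assoc, hmoveX, smul_mul_assoc, mul_assoc, hmoveP, mul_smul_comm, smul_smul,
      ← pow_add, ← two_mul, pow_mul, neg_one_sq, one_pow, one_smul, mul_assoc]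
  have hν : ((∑ j : Fin n, a j • ι ℝ (x j)) + ∑ i : Fin (n + 1), b i • ι ℝ (p i)) * (X * P)
      = b (Fin.last n) • (X * P * ι ℝ (p (Fin.last n))) := by
    rw [add_mul, Finset.sum_mul, Finset.sum_mul]
    rw [Finset.sum_eq_zero (fun j _ => by rw [smul_mul_assoc, hkillx j, smul_zero]), zero_add]
    rw [Fin.sum_univ_castSucc (fun i : Fin (n+1) => b i • ι ℝ (p i) * (X * P))]
    rw [Finset.sum_eq_zero (fun k _ => by rw [smul_mul_assoc, hkillp k, smul_zero]), zero_add]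
    rw [smul_mul_assoc, hlast]
  rw [hω, hpairs, mul_smul_comm, mul_smul_comm, hν, hPfull, ← mul_assoc X P,
    ← Nat.cast_smul_eq_nsmul ℝ, smul_smul, smul_smul]
  congr 1
  have hsign : ((-1:ℝ)) ^ (n * (n - 1) / 2) = (-1:ℝ) ^ (n / 2) := by
    rw [neg_one_pow_eq_pow_mod_two (n := n * (n - 1) / 2),
      neg_one_pow_eq_pow_mod_two (n := n / 2), my_parity n]
  rw [← hsign]
  ring
end
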